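/- arXiv:math/0406302 — 3 statements merged into one kernel-verified Lean document; each statement's English description precedes it below -/
import Mathlib

section
/- Let ≡ be an equivalence relation on the positive integers such that for all positive integers n, m, k: n ≡ m if and only if nk ≡ mk. Then there exists a unique subgroup H of the multiplicative group of positive rational numbers such that for all positive integers n, m: n ≡ m if and only if n/m ∈ H. -/
/-- A multiplicatively invariant equivalence relation on the positive
integers is given by membership of quotients in a unique subgroup of the positive
rationals (realized as the subgroup of positive elements of `ℚˣ`). -/
theorem stmt0 (r : ℕ+ → ℕ+ → Prop) (hequiv : Equivalence r)
    (hmul : ∀ n m k : ℕ+, r n m ↔ r (n * k) (m * k)) :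
    ∃! H : Subgroup ℚˣ, (∀ x ∈ H, (0 : ℚ) < x) ∧
      ∀ n m : ℕ+, r n m ↔ ∃ x ∈ H, (x : ℚ) = (n : ℚ) / (m : ℚ) := by
  -- key: r depends only on the quotient
  have key : ∀ a b c d : ℕ+, a * d = c * b → (r a b ↔ r c d) := by
    intro a b c d h
    have h1 : r a b ↔ r (a * d) (b * d) := hmul a b d
    have h2 : r c d ↔ r (c * b) (d * b) := hmul c d b
    rw [h1, h2, h, mul_comm b d]
  have qpos : ∀ n m : ℕ+, (0:ℚ) < (n:ℚ)/(m:ℚ) := by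
    intro n m
    positivity
  have qne : ∀ n m : ℕ+, ((n:ℚ)/(m:ℚ)) ≠ 0 := fun n m => (qpos n m).ne'
  -- cross-multiplication from equal quotients
  have cross : ∀ a b c d : ℕ+, (a:ℚ)/(b:ℚ) = (c:ℚ)/(d:ℚ) → a * d = c * b := by
    intro a b c d h
    have hb : ((b:ℕ):ℚ) ≠ 0 := by positivity
    have hd : ((d:ℕ):ℚ) ≠ 0 := by positivity
    rw [div_eq_div_iff hb hd] at h
    have : ((a*d : ℕ+) : ℚ) = ((c*b : ℕ+) : ℚ) := by push_cast; exact h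
    exact_mod_cast this
  refine ⟨{ carrier := {u : ℚˣ | ∃ n m : ℕ+, (u:ℚ) = (n:ℚ)/(m:ℚ) ∧ r n m}
            one_mem' := ⟨1, 1, by norm_num, hequiv.refl 1⟩
            mul_mem' := ?_
            inv_mem' := ?_ }, ⟨?_, ?_⟩, ?_⟩
  · rintro u v ⟨a, b, hu, hab⟩ ⟨c, d, hv, hcd⟩
    refine ⟨a*c, b*d, ?_, ?_⟩
    · push_cast
      rw [hu, hv]; ring
    · have h1 : r (a*c) (b*c) := (hmul a b c).mp hab
      have h2 : r (b*c) (b*d) := by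
        have := (hmul c d b).mp hcd
        rwa [mul_comm c b, mul_comm d b] at this
      exact hequiv.trans h1 h2
  · rintro u ⟨a, b, hu, hab⟩
    refine ⟨b, a, ?_, hequiv.symm hab⟩
    rw [Units.val_inv_eq_inv_val, hu, inv_div]
  · rintro x ⟨n, m, hx, -⟩
    rw [hx]; exact qpos n m
  · intro n m
    constructor
    · intro h
      refine ⟨Units.mk0 ((n:ℚ)/(m:ℚ)) (qne n m), ⟨n, m, rfl, h⟩, rfl⟩
    · rintro ⟨x, ⟨a, b, hx, hab⟩, hx'⟩
      have : (a:ℚ)/(b:ℚ) = (n:ℚ)/(m:ℚ) := by rw [← hx, hx']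
      exact (key a b n m (cross a b n m this)).mp hab
  · rintro H ⟨Hpos, Hiff⟩
    ext u
    simp only [Subgroup.mem_mk, Set.mem_setOf_eq]
    constructor
    · intro hu
      have hupos : (0:ℚ) < (u:ℚ) := Hpos u hu
      have hnum : 0 < (u:ℚ).num := Rat.num_pos.mpr hupos
      have hrep : (u:ℚ) = (((u:ℚ).num.toNat : ℕ) : ℚ) / (((u:ℚ).den : ℕ) : ℚ) := by
        have h1 : (((u:ℚ).num.toNat : ℕ) : ℚ) = (((u:ℚ).num : ℤ) : ℚ) := by
          exact_mod_cast congrArg (Int.cast : ℤ → ℚ) (Int.toNat_of_nonneg hnum.le)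
        rw [h1]; exact (Rat.num_div_den _).symm
      refine ⟨⟨(u:ℚ).num.toNat, by omega⟩, ⟨(u:ℚ).den, (u:ℚ).pos⟩, hrep, ?_⟩
      exact (Hiff _ _).mpr ⟨u, hu, hrep⟩
    · rintro ⟨a, b, hu, hab⟩
      obtain ⟨x, hxH, hx⟩ := (Hiff a b).mp hab
      have : x = u := Units.ext (by rw [hx, hu])
      rwa [← this]
end

section
/- Let (D, ≤, u) be a dimension group with functions r(d) (least rational with r(d)·u ≥ d) and l(d) (greatest rational with l(d)·u ≤ d). Then r(d) = 0 and l(d) = 0 together imply d = 0, and conversely r(0) = l(0) = 0. -/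
/-- `q • u ≥ d` for a rational `q`, interpreted by clearing denominators: for every
representation `q = a / b` with `b > 0` we have `b • d ≤ a • u`. -/
def ratGe {D : Type*} [AddCommGroup D] [PartialOrder D] (u d : D) (q : ℚ) : Prop :=
  ∀ a b : ℤ, 0 < b → q = (a : ℚ) / (b : ℚ) → b • d ≤ a • u

/-- `q • u ≤ d` for a rational `q`, interpreted by clearing denominators. -/
def ratLe {D : Type*} [AddCommGroup D] [PartialOrder D] (u d : D) (q : ℚ) : Prop :=
  ∀ a b : ℤ, 0 < b → q = (a : ℚ) / (b : ℚ) → a • u ≤ b • d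

/-- A dimension group: a countable partially ordered abelian group (translation
invariant order) with order unit `u`, in which every finite subset is contained in a
subgroup order-isomorphic to a finite direct power of `(ℤ, ≤)`. -/
structure IsDimensionGroup (D : Type*) [AddCommGroup D] [PartialOrder D] (u : D) : Prop where
  add_le_add : ∀ a b c : D, a ≤ b → a + c ≤ b + c
  countable : Countable D
  unit_nonneg : 0 ≤ u
  unit_arch : ∀ x : D, ∃ n : ℕ, 0 < n ∧ x ≤ (n : ℤ) • u
  locallyZ : ∀ s : Finset D, ∃ (k : ℕ) (S : AddSubgroup D) (e : S ≃+ (Fin k → ℤ)),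
    (∀ x ∈ s, x ∈ S) ∧ ∀ a b : S, a ≤ b ↔ e a ≤ e b

/-!
If `r 0 = l 0 = 0` failed, some rational `q` of the wrong sign would satisfy `q • u ≥ 0`
(resp. `q • u ≤ 0`); clearing denominators gives `m • u ≤ 0` for some `m > 0`, which together
with `0 ≤ u ≤ m • u` forces `u = 0`. But then every rational satisfies both inequalities, so the
sets have no least or greatest element. The other implication just reads off `d ≤ 0 • u`
and `0 • u ≤ d`.
-/

theorem IsDimensionGroup.isOrderedAddMonoid {D : Type*} [AddCommGroup D] [PartialOrder D]
    {u : D} (h : IsDimensionGroup D u) : IsOrderedAddMonoid D where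
  add_le_add_left a b hab c := h.add_le_add a b c hab

section RatBounds

variable {D : Type*} [AddCommGroup D] [PartialOrder D] {u d : D} {q : ℚ}

theorem ratGe.le_zero (hd : ratGe u d 0) : d ≤ 0 := by
  simpa using hd 0 1 one_pos (by simp)

theorem ratLe.nonneg (hd : ratLe u d 0) : 0 ≤ d := by
  simpa using hd 0 1 one_pos (by simp)

theorem eq_zero_of_zero_eq_div {a b : ℤ} (hb : 0 < b) (hab : (0 : ℚ) = a / b) : a = 0 := by
  have hb' : (b : ℚ) ≠ 0 := by exact_mod_cast hb.ne'
  exact_mod_cast (div_eq_zero_iff.1 hab.symm).resolve_right hb'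

theorem ratGe_zero_zero : ratGe u 0 0 := fun _ _ hb hab => by
  simp [eq_zero_of_zero_eq_div hb hab]

theorem ratLe_zero_zero : ratLe u 0 0 := fun _ _ hb hab => by
  simp [eq_zero_of_zero_eq_div hb hab]

theorem ratGe_unit_zero : ratGe (0 : D) 0 q := fun _ _ _ _ => by simp

theorem ratLe_unit_zero : ratLe (0 : D) 0 q := fun _ _ _ _ => by simp

theorem Rat.eq_num_div_den_int (q : ℚ) : q = (q.num : ℚ) / ((q.den : ℤ) : ℚ) := by
  push_cast
  exact (Rat.num_div_den q).symm

variable [IsOrderedAddMonoid D]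

theorem eq_zero_of_zsmul_nonpos (hu : 0 ≤ u) {m : ℤ} (hm : 0 < m) (hmu : m • u ≤ 0) : u = 0 :=
  le_antisymm (calc u = (1 : ℤ) • u := (one_zsmul u).symm
    _ ≤ m • u := zsmul_le_zsmul_left hu hm
    _ ≤ 0 := hmu) hu

theorem eq_zero_of_ratGe_zero_of_neg (hu : 0 ≤ u) (hq : q < 0) (hge : ratGe u 0 q) : u = 0 := by
  have hnum : 0 ≤ q.num • u := by
    simpa using hge q.num q.den (by exact_mod_cast q.den_pos) q.eq_num_div_den_int
  refine eq_zero_of_zsmul_nonpos hu (neg_pos.2 (Rat.num_neg.2 hq)) ?_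
  simpa [neg_zsmul] using hnum

theorem eq_zero_of_ratLe_zero_of_pos (hu : 0 ≤ u) (hq : 0 < q) (hle : ratLe u 0 q) : u = 0 := by
  have hnum : q.num • u ≤ 0 := by
    simpa using hle q.num q.den (by exact_mod_cast q.den_pos) q.eq_num_div_den_int
  exact eq_zero_of_zsmul_nonpos hu (Rat.num_pos.2 hq) hnum

theorem eq_zero_of_isLeast_ratGe_zero (hu : 0 ≤ u) {r : ℚ}
    (hr : IsLeast {q | ratGe u 0 q} r) : r = 0 := by
  refine le_antisymm (hr.2 ratGe_zero_zero) (not_lt.1 fun hneg => ?_)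
  obtain rfl := eq_zero_of_ratGe_zero_of_neg hu hneg hr.1
  have := hr.2 (ratGe_unit_zero (q := r - 1))
  linarith

theorem eq_zero_of_isGreatest_ratLe_zero (hu : 0 ≤ u) {l : ℚ}
    (hl : IsGreatest {q | ratLe u 0 q} l) : l = 0 := by
  refine le_antisymm (not_lt.1 fun hpos => ?_) (hl.2 ratLe_zero_zero)
  obtain rfl := eq_zero_of_ratLe_zero_of_pos hu hpos hl.1
  have := hl.2 (ratLe_unit_zero (q := l + 1))
  linarith

end RatBounds

/-- `r d = 0` and `l d = 0` together imply `d = 0`, and conversely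
`r 0 = l 0 = 0`. -/
theorem stmt7 {D : Type*} [AddCommGroup D] [PartialOrder D] (u : D)
    (h : IsDimensionGroup D u) (r l : D → ℚ)
    (hr : ∀ d, IsLeast {q : ℚ | ratGe u d q} (r d))
    (hl : ∀ d, IsGreatest {q : ℚ | ratLe u d q} (l d)) :
    (∀ d : D, r d = 0 → l d = 0 → d = 0) ∧ r 0 = 0 ∧ l 0 = 0 := by
  have := h.isOrderedAddMonoid
  refine ⟨fun d hr0 hl0 => ?_, eq_zero_of_isLeast_ratGe_zero h.unit_nonneg (hr 0),
    eq_zero_of_isGreatest_ratLe_zero h.unit_nonneg (hl 0)⟩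
  have hle : ratGe u d 0 := hr0 ▸ (hr d).1
  have hge : ratLe u d 0 := hl0 ▸ (hl d).1
  exact le_antisymm hle.le_zero hge.nonneg
end

section
/- Let (D, ≤, u) be a dimension group of rank at least 2 and Φ an order-preserving automorphism of D with Φ(u) = q·u for a positive rational q. If there exists a nonzero d ∈ D with Φ(d) = d, then q = 1. -/
/-!
If `Φ u = q • u` and `Φ d = d`, then `d ≤ n • u` gives, after applying `Φ` `K` times,
`d ≤ n q ^ K • u`; for `q < 1` this makes `d` lie below arbitrarily small positive multiples
of `u`, and in a chart `ℤ ^ k` containing `d` and `u` that forces `d ≤ 0`. The same for `-d`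
gives `d = 0`, and the case `q > 1` follows by passing to `Φ⁻¹`.
-/

lemma exists_mul_pow_lt_pow {p m : ℕ} (hpm : p < m) (c : ℕ) : ∃ K, c * p ^ K < m ^ K := by
  have hm : (0 : ℚ) < m := by exact_mod_cast (Nat.zero_le p).trans_lt hpm
  obtain ⟨K, hK⟩ := exists_pow_lt_of_lt_one (x := ((c : ℚ) + 1)⁻¹) (y := (p : ℚ) / m)
    (by positivity) ((div_lt_one hm).2 (by exact_mod_cast hpm))
  refine ⟨K, ?_⟩
  rw [div_pow, div_lt_iff₀ (by positivity), ← div_eq_inv_mul,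
    lt_div_iff₀ (by positivity)] at hK
  exact_mod_cast (by nlinarith [pow_nonneg (Nat.cast_nonneg p : (0 : ℚ) ≤ p) K] :
    (c : ℚ) * p ^ K < m ^ K)

namespace IsDimensionGroup

variable {D : Type*} [AddCommGroup D] [PartialOrder D] {u : D}

lemma isOrderedAddMonoid_s15 (h : IsDimensionGroup D u) : IsOrderedAddMonoid D where
  add_le_add_left a b hab c := h.add_le_add a b c hab
  add_le_add_right a b hab c := by simpa only [add_comm c] using h.add_le_add a b c hab

/-- The hypothesis says `x ≤ (a / b) • u` for arbitrarily small ratios `a / b`,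
i.e. `r(x) ≤ 0`. -/
lemma nonpos_of_forall_exists_nsmul_le (h : IsDimensionGroup D u) {x : D}
    (hx : ∀ N : ℕ, ∃ a b : ℕ, N * a < b ∧ b • x ≤ a • u) : x ≤ 0 := by
  classical
  obtain ⟨k, S, e, hmem, hle⟩ := h.locallyZ {x, u}
  set x' : S := ⟨x, hmem x (by simp)⟩
  set u' : S := ⟨u, hmem u (by simp)⟩
  by_contra hpos
  have : ¬ e x' ≤ e 0 := fun hle0 => hpos ((hle x' 0).2 hle0)
  obtain ⟨i, hi⟩ : ∃ i, 0 < e x' i := by simpa [Pi.le_def] using this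
  -- a positive coordinate `X` of `x` forces `b ≤ b * X ≤ a * U ≤ a * |U| < b`
  obtain ⟨a, b, hab, hba⟩ := hx (e u' i).natAbs
  have hS : b • x' ≤ a • u' := by
    rw [← Subtype.coe_le_coe, AddSubgroup.coe_nsmul, AddSubgroup.coe_nsmul]
    exact hba
  have hcoord : (b : ℤ) * e x' i ≤ a * e u' i := by
    simpa [map_nsmul] using (hle _ _).1 hS i
  have hU : (a : ℤ) * e u' i ≤ a * (e u' i).natAbs :=
    mul_le_mul_of_nonneg_left Int.le_natAbs (Int.natCast_nonneg a)
  have hab' : (a : ℤ) * (e u' i).natAbs < b := by exact_mod_cast (mul_comm a _ ▸ hab)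
  nlinarith

lemma pow_nsmul_le_of_map_eq_self (h : IsDimensionGroup D u) (Ψ : D ≃+o D) {p m : ℕ}
    (hΨu : m • Ψ u = p • u) {x : D} (hfix : Ψ x = x) {n : ℕ} (hxn : x ≤ n • u)
    (K : ℕ) :
    m ^ K • x ≤ (n * p ^ K) • u := by
  have := h.isOrderedAddMonoid_s15
  induction K with
  | zero => simpa using hxn
  | succ K ih =>
    calc m ^ (K + 1) • x
        = m • Ψ (m ^ K • x) := by rw [map_nsmul, hfix, pow_succ, mul_nsmul]
      _ ≤ m • Ψ ((n * p ^ K) • u) := nsmul_le_nsmul_right ((map_le_map_iff Ψ).2 ih) m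
      _ = (n * p ^ (K + 1)) • u := by
        rw [map_nsmul, smul_comm, hΨu, ← mul_nsmul, pow_succ]
        ring_nf

lemma eq_zero_of_map_eq_self_of_lt (h : IsDimensionGroup D u) (Ψ : D ≃+o D) {p m : ℕ}
    (hpm : p < m) (hΨu : m • Ψ u = p • u) {d : D} (hfix : Ψ d = d) : d = 0 := by
  have nonpos : ∀ x : D, Ψ x = x → x ≤ 0 := by
    intro x hx
    obtain ⟨n, -, hxn⟩ := h.unit_arch x
    rw [natCast_zsmul] at hxn
    refine h.nonpos_of_forall_exists_nsmul_le fun N => ?_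
    obtain ⟨K, hK⟩ := exists_mul_pow_lt_pow hpm (N * n)
    exact ⟨n * p ^ K, m ^ K, by rwa [← mul_assoc],
      h.pow_nsmul_le_of_map_eq_self Ψ hΨu hx hxn K⟩
  have := h.isOrderedAddMonoid_s15
  exact le_antisymm (nonpos d hfix)
    (neg_nonpos.1 (nonpos (-d) (by rw [map_neg, hfix])))

lemma eq_zero_of_map_eq_self_of_ne (h : IsDimensionGroup D u) (Ψ : D ≃+o D) {p m : ℕ}
    (hpm : p ≠ m) (hΨu : m • Ψ u = p • u) {d : D} (hfix : Ψ d = d) : d = 0 := by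
  rcases hpm.lt_or_gt with hlt | hgt
  · exact h.eq_zero_of_map_eq_self_of_lt Ψ hlt hΨu hfix
  · refine h.eq_zero_of_map_eq_self_of_lt Ψ.symm hgt ?_ ?_
    · simpa using (congrArg Ψ.symm hΨu).symm
    · simpa using (congrArg Ψ.symm hfix).symm

end IsDimensionGroup

theorem stmt15_general {D : Type*} [AddCommGroup D] [PartialOrder D] (u : D)
    (h : IsDimensionGroup D u)
    (Φ : D ≃+ D) (hord : ∀ x y : D, x ≤ y ↔ Φ x ≤ Φ y)
    (q : ℚ) (hq : 0 < q) (hΦu : (q.den : ℤ) • Φ u = q.num • u)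
    (d : D) (hd : d ≠ 0) (hfix : Φ d = d) : q = 1 := by
  let Ψ : D ≃+o D := { Φ with map_le_map_iff' := (hord _ _).symm }
  have hnum : ((q.num.toNat : ℕ) : ℤ) = q.num := Int.toNat_of_nonneg (Rat.num_pos.2 hq).le
  have hΨu : q.den • Ψ u = q.num.toNat • u := by
    rw [← natCast_zsmul, ← natCast_zsmul, hnum]
    exact hΦu
  by_contra hq1
  refine hd (h.eq_zero_of_map_eq_self_of_ne Ψ (fun heq => hq1 ?_) hΨu hfix)
  rw [← Rat.num_div_den q, ← hnum, heq]
  exact div_self (by exact_mod_cast q.den_nz)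

/-- In a dimension group of rank at least 2, an order-preserving
automorphism `Φ` with `Φ u = q • u` (`q` a positive rational) fixing some nonzero
element must have `q = 1`. -/
theorem stmt15 {D : Type*} [AddCommGroup D] [PartialOrder D] (u : D)
    (h : IsDimensionGroup D u)
    (hrank : ∃ f : Fin 2 → D, LinearIndependent ℤ f)
    (Φ : D ≃+ D) (hord : ∀ x y : D, x ≤ y ↔ Φ x ≤ Φ y)
    (q : ℚ) (hq : 0 < q) (hΦu : (q.den : ℤ) • Φ u = q.num • u)
    (d : D) (hd : d ≠ 0) (hfix : Φ d = d) : q = 1 :=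
  stmt15_general u h Φ hord q hq hΦu d hd hfix
end
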